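/- Let ReLU(v) denote the componentwise map v ↦ max(v, 0), and let U, W, V, D₁, D₂, D₃ be matrices with all entries nonnegative (of compatible dimensions). For a sequence of inputs u₁, …, u_T ∈ ℝᵈ write û_t = (u_t, −u_t) ∈ ℝ^{2d}, and define recursively (with z₀ = 0 and û₀ = 0): z_t = ReLU(U û_t + W z_{t−1} + D₂ û_{t−1}) and y_t = ReLU(V z_t + D₁ z_{t−1} + D₃ û_t) for t = 1, …, T. Then for each t, every coordinate of y_t is a convex function of the concatenated input (u₁, …, u_t) ∈ ℝ^{t·d}. -/

import Mathlib

/-- The hidden state of the recurrent ReLU network: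
`z₀ = 0` and `z_{t+1} = ReLU (U û_{t+1} + W z_t + D₂ û_t)`,
where `uh : ℕ → (Fin d ⊕ Fin d → ℝ)` is the sequence of (expanded) inputs. -/
noncomputable def zstate (d p : ℕ) (U : Matrix (Fin p) (Fin d ⊕ Fin d) ℝ)
    (W : Matrix (Fin p) (Fin p) ℝ) (D2 : Matrix (Fin p) (Fin d ⊕ Fin d) ℝ)
    (uh : ℕ → (Fin d ⊕ Fin d → ℝ)) : ℕ → Fin p → ℝ
  | 0 => 0
  | (t + 1) => fun j =>
      max ((U.mulVec (uh (t + 1)) + W.mulVec (zstate d p U W D2 uh t) +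
        D2.mulVec (uh t)) j) 0

/-!
Nonnegative combinations of convex functions and their maxima with `0` are convex, and the
expanded input `û_s = (u_s, -u_s)` depends linearly on `u`. By induction on `t`, every
coordinate of the hidden state `z_t` is therefore convex in `u`, and `y_t` is a ReLU of a
nonnegative combination of `z_t`, `z_{t-1}` and `û_t`.
-/

open Matrix Set

section ConvexCombination

variable {E : Type*} [AddCommMonoid E] [Module ℝ E] {s : Set E}

theorem convexOn_finset_sum {ι : Type*} (hs : Convex ℝ s) (t : Finset ι) {f : ι → E → ℝ}
    (hf : ∀ i ∈ t, ConvexOn ℝ s (f i)) : ConvexOn ℝ s fun x => ∑ i ∈ t, f i x := by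
  classical
  induction t using Finset.induction_on with
  | empty => simpa using convexOn_const 0 hs
  | insert i t hi ih =>
    simp only [Finset.sum_insert hi]
    exact (hf i (t.mem_insert_self i)).add (ih fun k hk => hf k (Finset.mem_insert_of_mem hk))

theorem convexOn_mulVec_apply {m n : Type*} [Fintype n] (hs : Convex ℝ s) {M : Matrix m n ℝ}
    (hM : ∀ i k, 0 ≤ M i k) {v : E → n → ℝ} (hv : ∀ k, ConvexOn ℝ s fun x => v x k) (i : m) :
    ConvexOn ℝ s fun x => (M *ᵥ v x) i :=
  convexOn_finset_sum hs Finset.univ fun k _ => (hv k).smul (hM i k)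

theorem convexOn_relu_mulVec_add_mulVec_add_mulVec {l m n o : Type*} [Fintype m] [Fintype n]
    [Fintype o] (hs : Convex ℝ s) {A : Matrix l m ℝ} {B : Matrix l n ℝ} {C : Matrix l o ℝ}
    (hA : ∀ i k, 0 ≤ A i k) (hB : ∀ i k, 0 ≤ B i k) (hC : ∀ i k, 0 ≤ C i k)
    {a : E → m → ℝ} {b : E → n → ℝ} {c : E → o → ℝ} (ha : ∀ k, ConvexOn ℝ s fun x => a x k)
    (hb : ∀ k, ConvexOn ℝ s fun x => b x k) (hc : ∀ k, ConvexOn ℝ s fun x => c x k) (i : l) :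
    ConvexOn ℝ s fun x => max ((A *ᵥ a x + B *ᵥ b x + C *ᵥ c x) i) 0 :=
  (((convexOn_mulVec_apply hs hA ha i).add (convexOn_mulVec_apply hs hB hb i)).add
    (convexOn_mulVec_apply hs hC hc i)).sup (convexOn_const 0 hs)

end ConvexCombination

theorem convexOn_zstate {E : Type*} [AddCommMonoid E] [Module ℝ E] {s : Set E} {d p : ℕ}
    {U : Matrix (Fin p) (Fin d ⊕ Fin d) ℝ} {W : Matrix (Fin p) (Fin p) ℝ}
    {D2 : Matrix (Fin p) (Fin d ⊕ Fin d) ℝ} {uh : E → ℕ → Fin d ⊕ Fin d → ℝ}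
    (hs : Convex ℝ s) (hU : ∀ i k, 0 ≤ U i k) (hW : ∀ i k, 0 ≤ W i k)
    (hD2 : ∀ i k, 0 ≤ D2 i k) (huh : ∀ n k, ConvexOn ℝ s fun x => uh x n k) :
    ∀ n k, ConvexOn ℝ s fun x => zstate d p U W D2 (uh x) n k
  | 0, _ => convexOn_const 0 hs
  | n + 1, k => convexOn_relu_mulVec_add_mulVec_add_mulVec hs hU hW hD2 (huh (n + 1))
      (convexOn_zstate hs hU hW hD2 huh n) (huh n) k

noncomputable def expandedInput (T d s : ℕ) : (Fin T → Fin d → ℝ) →ₗ[ℝ] Fin d ⊕ Fin d → ℝ :=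
  if h : 1 ≤ s ∧ s ≤ T then
    let π : (Fin T → Fin d → ℝ) →ₗ[ℝ] Fin d → ℝ :=
      LinearMap.proj ⟨s - 1, Nat.sub_one_lt_of_le h.1 h.2⟩
    LinearMap.pi (Sum.elim (fun l => LinearMap.proj l ∘ₗ π) fun l => -(LinearMap.proj l ∘ₗ π))
  else 0

theorem expandedInput_apply (T d s : ℕ) (u : Fin T → Fin d → ℝ) :
    expandedInput T d s u =
      if h : 1 ≤ s ∧ s ≤ T then
        let i : Fin T := ⟨s - 1, Nat.sub_one_lt_of_le h.1 h.2⟩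
        Sum.elim (u i) fun l => -u i l
      else 0 := by
  unfold expandedInput
  split_ifs <;> ext (_ | _) <;> rfl

/-- **Proposition 2 (input convexity of ICRNN).**
Let `U, W, V, D₁, D₂, D₃` be matrices with all entries nonnegative.  For inputs
`u₁, …, u_T ∈ ℝᵈ` set `û_t = (u_t, -u_t)` (with `û₀ = 0`, `z₀ = 0`) and define
`z_t = ReLU (U û_t + W z_{t-1} + D₂ û_{t-1})`,
`y_t = ReLU (V z_t + D₁ z_{t-1} + D₃ û_t)`.
Then for each `1 ≤ t ≤ T`, every coordinate of `y_t` is a convex function of the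
concatenated input `(u₁, …, u_T)`. -/
theorem icrnn_inputConvex (d p q T : ℕ)
    (U : Matrix (Fin p) (Fin d ⊕ Fin d) ℝ)
    (W : Matrix (Fin p) (Fin p) ℝ)
    (V : Matrix (Fin q) (Fin p) ℝ)
    (D1 : Matrix (Fin q) (Fin p) ℝ)
    (D2 : Matrix (Fin p) (Fin d ⊕ Fin d) ℝ)
    (D3 : Matrix (Fin q) (Fin d ⊕ Fin d) ℝ)
    (hU : ∀ j l, 0 ≤ U j l) (hW : ∀ j l, 0 ≤ W j l) (hV : ∀ j l, 0 ≤ V j l)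
    (hD1 : ∀ j l, 0 ≤ D1 j l) (hD2 : ∀ j l, 0 ≤ D2 j l) (hD3 : ∀ j l, 0 ≤ D3 j l)
    (t : ℕ) (j : Fin q) :
    ConvexOn ℝ Set.univ (fun u : Fin T → Fin d → ℝ =>
      let uh : ℕ → (Fin d ⊕ Fin d → ℝ) := fun s =>
        if h : 1 ≤ s ∧ s ≤ T then
          Sum.elim (u ⟨s - 1, by omega⟩) (fun l => -(u ⟨s - 1, by omega⟩ l))
        else 0
      max ((V.mulVec (zstate d p U W D2 uh t) +
        D1.mulVec (zstate d p U W D2 uh (t - 1)) + D3.mulVec (uh t)) j) 0) := by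
  have hinput : ∀ s l, ConvexOn ℝ univ fun u => expandedInput T d s u l := fun s l =>
    (LinearMap.proj l ∘ₗ expandedInput T d s).convexOn convex_univ
  simp only [expandedInput_apply] at hinput
  have hstate := convexOn_zstate convex_univ hU hW hD2 hinput
  exact convexOn_relu_mulVec_add_mulVec_add_mulVec convex_univ hV hD1 hD3 (hstate t)
    (hstate (t - 1)) (hinput t) j
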